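/- There exists a constant c₀ > 0 such that for all A, B in the set K = {P(θ) : θ ∈ [0,2π)}, det(A - B) ≥ c₀ |A - B|⁴, where |·| is the Frobenius norm on 2×2 matrices. -/

import Mathlib

noncomputable section
open Real

/-- The parameterization of the set K. -/
def Pmat (θ : ℝ) : Matrix (Fin 2) (Fin 2) ℝ :=
  !![-(2 / 3) * cos θ ^ 3, (2 / 3) * sin θ ^ 3;
     -sin θ * (1 - (2 / 3) * sin θ ^ 2), -cos θ * (1 - (2 / 3) * cos θ ^ 2)]

/-- Frobenius norm of a 2×2 real matrix. -/
def frobNorm (A : Matrix (Fin 2) (Fin 2) ℝ) : ℝ :=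
  Real.sqrt (∑ i : Fin 2, ∑ j : Fin 2, (A i j) ^ 2)

lemma aux_ineq (x : ℝ) (hl : -1 ≤ x) (hr : x ≤ 1) :
    1/8 * ((2/9) * (1 - x) * (2*x^2 + 2*x + 5)) ^ 2 ≤ (2/9) * (1 - x)^2 * (2 + x) := by
  nlinarith [mul_nonneg (sq_nonneg (1-x)) (mul_nonneg (mul_nonneg
      (by linarith : (0:ℝ) ≤ 1 - x) (by linarith : (0:ℝ) ≤ 1 + x))
      (by positivity : (0:ℝ) ≤ 4*(x+1)^2+24)),
    mul_nonneg (sq_nonneg (1-x)) (by linarith : (0:ℝ) ≤ 8*x+19)]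

theorem stmt6 :
    ∃ c₀ : ℝ, 0 < c₀ ∧ ∀ θ₁ θ₂ : ℝ,
      c₀ * frobNorm (Pmat θ₁ - Pmat θ₂) ^ 4 ≤ (Pmat θ₁ - Pmat θ₂).det := by
  refine ⟨1/8, by norm_num, fun θ₁ θ₂ => ?_⟩
  have hcl : -1 ≤ cos θ₁ * cos θ₂ + sin θ₁ * sin θ₂ := by
    rw [← Real.cos_sub]; exact neg_one_le_cos _
  have hcr : cos θ₁ * cos θ₂ + sin θ₁ * sin θ₂ ≤ 1 := by
    rw [← Real.cos_sub]; exact cos_le_one _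
  have h1 := sin_sq_add_cos_sq θ₁
  have h2 := sin_sq_add_cos_sq θ₂
  set c : ℝ := cos θ₁ * cos θ₂ + sin θ₁ * sin θ₂ with hc
  have hT : (∑ i : Fin 2, ∑ j : Fin 2, ((Pmat θ₁ - Pmat θ₂) i j) ^ 2)
      = (2/9) * (1 - c) * (2*c^2 + 2*c + 5) := by
    simp [Pmat, Matrix.sub_apply, Fin.sum_univ_two, hc]
    linear_combination
      ((5/9 : ℝ) + (4/3)*cos θ₁*sin θ₂^2*cos θ₂ + (-4/9)*cos θ₁^2 + (8/9)*cos θ₁^4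
        + (4/3)*sin θ₁*sin θ₂ + (-4/3)*sin θ₁*sin θ₂^3 + (-4/9)*sin θ₁^2
        + (-8/9)*sin θ₁^2*cos θ₁^2 + (8/9)*sin θ₁^4) * h1 +
      ((5/9 : ℝ) + (-4/9)*cos θ₂^2 + (8/9)*cos θ₂^4 + (-4/9)*sin θ₂^2
        + (-8/9)*sin θ₂^2*cos θ₂^2 + (8/9)*sin θ₂^4 + (4/3)*cos θ₁*cos θ₂
        + (-4/3)*cos θ₁^3*cos θ₂ + (4/3)*sin θ₁*cos θ₁^2*sin θ₂) * h2
  have hD : (Pmat θ₁ - Pmat θ₂).det = (2/9) * (1 - c)^2 * (2 + c) := by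
    rw [Matrix.det_fin_two]
    simp [Pmat, Matrix.sub_apply, hc]
    linear_combination
      ((2/9 : ℝ) + (-2/3)*cos θ₁*sin θ₂^2*cos θ₂ + (2/9)*cos θ₁^2 + (-4/9)*cos θ₁^4
        + (-2/3)*sin θ₁*sin θ₂ + (2/3)*sin θ₁*sin θ₂^3 + (2/9)*sin θ₁^2
        + (4/9)*sin θ₁^2*cos θ₁^2 + (-4/9)*sin θ₁^4) * h1 +
      ((2/9 : ℝ) + (2/9)*cos θ₂^2 + (-4/9)*cos θ₂^4 + (2/9)*sin θ₂^2
        + (4/9)*sin θ₂^2*cos θ₂^2 + (-4/9)*sin θ₂^4 + (-2/3)*cos θ₁*cos θ₂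
        + (2/3)*cos θ₁^3*cos θ₂ + (-2/3)*sin θ₁*cos θ₁^2*sin θ₂) * h2
  have hTnn : (0:ℝ) ≤ ∑ i : Fin 2, ∑ j : Fin 2, ((Pmat θ₁ - Pmat θ₂) i j) ^ 2 :=
    Finset.sum_nonneg fun i _ => Finset.sum_nonneg fun j _ => sq_nonneg _
  have hfr : frobNorm (Pmat θ₁ - Pmat θ₂) ^ 4
      = ((2/9) * (1 - c) * (2*c^2 + 2*c + 5)) ^ 2 := by
    rw [frobNorm, (fun x => by ring : ∀ x : ℝ, x ^ 4 = (x ^ 2) ^ 2), Real.sq_sqrt hTnn, hT]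
  rw [hfr, hD]
  exact aux_ineq c hcl hcr
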